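/- arXiv:1708.08049 — 2 statements merged into one kernel-verified Lean document; each statement's English description precedes it below -/
import Mathlib

section
/- Suppose μ is a singular cardinal with cf(μ) = ω₁ and μ ≤ 2^ω, (μ_γ : γ < ω₁) is a strictly increasing sequence of regular cardinals with supremum μ, J is an ideal on ω₁ extending the ideal of bounded subsets of ω₁, and (g_α : α < μ⁺) is a sequence of functions g_α ∈ ∏_{γ<ω₁} μ_γ witnessing tcf(∏_{γ<ω₁} μ_γ, J) = μ⁺. Assume further that for every A ⊆ μ⁺ with |A| = ℵ₁ there exists δ < ω₁ such that |{g_α(γ) : α ∈ A, γ < δ}| = ℵ₁. Then 𝔤𝔭 ≠ μ. -/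
open Cardinal Set

universe u

/-- `C` is a club subset of the ordinal `δ`: it consists of ordinals below `δ`,
is unbounded in `δ`, and contains every limit ordinal `β < δ` with `sup (C ∩ β) = β`. -/
def IsClubIn (δ : Ordinal) (C : Set Ordinal) : Prop :=
  C ⊆ Set.Iio δ ∧ (∀ a < δ, ∃ b ∈ C, a ≤ b) ∧
    ∀ β < δ, Order.IsSuccLimit β → sSup (C ∩ Set.Iio β) = β → β ∈ C

/-- `A` is a set of ordinals of cardinality `c` (witnessed by a bijective
enumeration of `A` by the ordinals below `c.ord`). -/
def HasCard (A : Set Ordinal.{u}) (c : Cardinal.{u}) : Prop :=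
  ∃ e : Ordinal → Ordinal, Set.BijOn e (Set.Iio c.ord) A

/-- An ideal on the set of ordinals below `θ`. -/
structure IdealOn (θ : Ordinal) where
  sets : Set (Set Ordinal)
  subset_Iio : ∀ A ∈ sets, A ⊆ Set.Iio θ
  mem_of_subset : ∀ A ∈ sets, ∀ B ⊆ A, B ∈ sets
  union_mem : ∀ A ∈ sets, ∀ B ∈ sets, A ∪ B ∈ sets
  proper : Set.Iio θ ∉ sets

/-- `(f α : α < lam.ord)` is a `<_J`-increasing, `<_J`-cofinal sequence in the
product `∏_{i<θ} μs i`, witnessing `tcf (∏_{i<θ} μs i, J) = lam`. -/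
def IsTcfWitness (θ : Ordinal) (J : IdealOn θ) (μs : Ordinal → Cardinal)
    (lam : Cardinal) (f : Ordinal → Ordinal → Ordinal) : Prop :=
  (∀ α < lam.ord, ∀ i < θ, f α i < (μs i).ord) ∧
  (∀ α β, α < β → β < lam.ord → {i | i < θ ∧ f β i ≤ f α i} ∈ J.sets) ∧
  (∀ g : Ordinal → Ordinal, (∀ i < θ, g i < (μs i).ord) →
    ∃ α < lam.ord, {i | i < θ ∧ f α i ≤ g i} ∈ J.sets)

/-- The Galvin cardinal characteristic `𝔤𝔭`: the least cardinal `κ` such that every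
family `{C α : α < κ⁺}` of clubs of `ω₁` has a subfamily of size `ℵ₁`
whose intersection is a club of `ω₁`. -/
noncomputable def gp : Cardinal.{u} :=
  sInf {κ : Cardinal.{u} | ∀ C : Ordinal.{u} → Set Ordinal.{u},
    (∀ α < (Order.succ κ).ord, IsClubIn (Cardinal.aleph 1).ord (C α)) →
    ∃ b : Ordinal.{u} → Ordinal.{u},
      (∀ β < (Cardinal.aleph 1).ord, b β < (Order.succ κ).ord) ∧
      Set.InjOn b (Set.Iio (Cardinal.aleph 1).ord) ∧
      IsClubIn (Cardinal.aleph 1).ord (⋂ β ∈ Set.Iio (Cardinal.aleph 1).ord, C (b β))}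

/-!
If `𝔤𝔭 = μ`, every `μ_γ < μ` fails the Galvin property: there are clubs `D_γ ξ`, `ξ < μ_γ⁺`,
no `ℵ₁` of which have club intersection. The `μ⁺` diagonal intersections
`C α = Δ_γ D_γ (g α γ)` are clubs, so some `ℵ₁` of them, indexed by `A`, have a club intersection
`T`. By the hypothesis on the scale, some coordinate `γ` takes `ℵ₁` distinct values `g α γ`,
`α ∈ A`. Above `γ`, `T` lies in every `D_γ (g α γ)`, so these `ℵ₁` clubs of the `γ`-th family have
club intersection, a contradiction.
-/

open Order

universe v

-- The `(Cardinal.aleph 1).ord` of the definitions above, which equals Mathlib's `ω_ 1`.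
local notation "ω₁" => Cardinal.ord (Cardinal.aleph 1)

section ClubsBelow

variable {δ β γ x : Ordinal.{u}} {S T C : Set Ordinal.{u}}

theorem sSup_inter_Iio_eq_iff : sSup (S ∩ Iio β) = β ↔ ∀ z < β, ∃ y ∈ S, z < y ∧ y < β := by
  constructor
  · intro h z hz
    obtain ⟨y, ⟨hyS, hyβ⟩, hzy⟩ := exists_lt_of_lt_csSup' (h.symm ▸ hz)
    exact ⟨y, hyS, hzy, hyβ⟩
  · intro h
    refine le_antisymm (csSup_le' fun y hy => hy.2.le) (le_of_forall_lt fun z hz => ?_)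
    obtain ⟨y, hyS, hzy, hyβ⟩ := h z hz
    exact hzy.trans_le (le_csSup ⟨β, fun _ hw => hw.2.le⟩ ⟨hyS, hyβ⟩)

theorem sSup_inter_Iio_eq_of_inter_Ioi_subset (hγ : γ < β) (hST : S ∩ Ioi γ ⊆ T)
    (h : sSup (S ∩ Iio β) = β) : sSup (T ∩ Iio β) = β := by
  refine sSup_inter_Iio_eq_iff.2 fun z hz => ?_
  obtain ⟨y, hyS, hzy, hyβ⟩ := sSup_inter_Iio_eq_iff.1 h (max z γ) (max_lt hz hγ)
  exact ⟨y, hST ⟨hyS, (le_max_right z γ).trans_lt hzy⟩, (le_max_left z γ).trans_lt hzy, hyβ⟩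

theorem IsClubIn.exists_gt (hC : IsClubIn δ C) (hδ : IsSuccLimit δ) (hx : x < δ) :
    ∃ y ∈ C, x < y := by
  obtain ⟨y, hyC, hy⟩ := hC.2.1 (succ x) (hδ.succ_lt hx)
  exact ⟨y, hyC, (lt_succ x).trans_le hy⟩

theorem IsClubIn.mem_of_forall_lt_exists (hC : IsClubIn δ C) (hβ : β < δ) (hlim : IsSuccLimit β)
    (h : ∀ z < β, ∃ y ∈ C, z < y ∧ y < β) : β ∈ C :=
  hC.2.2 β hβ hlim (sSup_inter_Iio_eq_iff.2 h)

theorem isClubIn_biInter_of_inter_Ioi_subset {ι : Type*} {I : Set ι} {E : ι → Set Ordinal.{u}}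
    (hδ : IsSuccLimit δ) (hI : I.Nonempty) (hE : ∀ i ∈ I, IsClubIn δ (E i))
    (hT : IsClubIn δ T) (hγ : γ < δ) (hTE : ∀ i ∈ I, T ∩ Ioi γ ⊆ E i) :
    IsClubIn δ (⋂ i ∈ I, E i) := by
  obtain ⟨i₀, hi₀⟩ := hI
  refine ⟨(biInter_subset_of_mem hi₀).trans (hE i₀ hi₀).1, fun a ha => ?_, ?_⟩
  · obtain ⟨y, hyT, hy⟩ := hT.exists_gt hδ (max_lt ha hγ)
    refine ⟨y, mem_iInter₂.2 fun i hi => hTE i hi ⟨hyT, ?_⟩, (le_max_left a γ).trans hy.le⟩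
    exact (le_max_right a γ).trans_lt hy
  · intro β hβ hlim hsup
    refine mem_iInter₂.2 fun i hi => (hE i hi).2.2 β hβ hlim ?_
    exact sSup_inter_Iio_eq_of_inter_Ioi_subset hlim.pos
      (inter_subset_left.trans (biInter_subset_of_mem hi)) hsup

end ClubsBelow

section DiagonalIntersection

variable {κ : Cardinal.{u}} {D : Ordinal.{u} → Set Ordinal.{u}}

theorem exists_forall_inter_Ioc_nonempty (hκ : κ.IsRegular)
    (hD : ∀ γ < κ.ord, IsClubIn κ.ord (D γ)) {x : Ordinal.{u}} (hx : x < κ.ord) :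
    ∃ s, x < s ∧ s < κ.ord ∧ ∀ γ < x, (D γ ∩ Ioc x s).Nonempty := by
  have hlim : IsSuccLimit κ.ord := isSuccLimit_ord hκ.aleph0_le
  choose f hfD hxf using fun γ : Iio x => (hD γ (γ.2.trans hx)).exists_gt hlim hx
  have hf : ∀ γ, f γ < κ.ord := fun γ => (hD γ (γ.2.trans hx)).1 (hfD γ)
  have hsup : ⨆ γ, f γ < κ.ord := by
    refine Ordinal.lift_iSup_lt_of_lt_cof ?_ hf
    rw [mk_Iio_ordinal, Cardinal.lift_lift, ← Ordinal.lift_cof, hκ.cof_ord]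
    exact lift_lt.2 (lt_ord.1 hx)
  refine ⟨max (succ x) (⨆ γ, f γ), (lt_succ x).trans_le (le_max_left _ _),
    max_lt (hlim.succ_lt hx) hsup, fun γ hγ => ⟨f ⟨γ, hγ⟩, hfD ⟨γ, hγ⟩, hxf _, ?_⟩⟩
  exact (Ordinal.le_iSup f ⟨γ, hγ⟩).trans (le_max_right _ _)

theorem isClubIn_diagInter (hκ : κ.IsRegular) (hκ₀ : ℵ₀ < κ)
    (hD : ∀ γ < κ.ord, IsClubIn κ.ord (D γ)) :
    IsClubIn κ.ord {β | β < κ.ord ∧ ∀ γ < β, β ∈ D γ} := by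
  refine ⟨fun β hβ => hβ.1, fun a ha => ?_, fun β hβ hlim hsup => ⟨hβ, fun γ hγ => ?_⟩⟩
  · choose! s hxs hs hsD using fun x (hx : x < κ.ord) => exists_forall_inter_Ioc_nonempty hκ hD hx
    have hiter : ∀ n, s^[n] a < κ.ord := fun n => by
      induction n with
      | zero => exact ha
      | succ n ih => rw [Function.iterate_succ_apply']; exact hs _ ih
    -- `B = sup_n s^[n] a` is a limit at which every `D γ`, `γ < B`, accumulates.
    set B := Ordinal.nfp s a
    have hB : B < κ.ord := Ordinal.nfp_lt_ord (by rwa [hκ.cof_ord]) hs ha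
    have hsB : ∀ n, s (s^[n] a) < B := fun n => calc
      s (s^[n] a) = s^[n + 1] a := (Function.iterate_succ_apply' s n a).symm
      _ < s (s^[n + 1] a) := hxs _ (hiter _)
      _ = s^[n + 2] a := (Function.iterate_succ_apply' s _ a).symm
      _ ≤ B := Ordinal.iterate_le_nfp s a _
    have hBlim : IsSuccLimit B := by
      refine Ordinal.isSuccLimit_iff.2 ⟨?_, isSuccPrelimit_of_succ_lt fun z hz => ?_⟩
      · exact ne_bot_of_gt ((hxs a ha).trans (hsB 0))
      · obtain ⟨n, hn⟩ := Ordinal.lt_nfp_iff.1 hz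
        exact (succ_le_of_lt hn).trans_lt ((hxs _ (hiter n)).trans (hsB n))
    refine ⟨B, ⟨hB, fun γ hγ => ?_⟩, Ordinal.le_nfp s a⟩
    refine (hD γ (hγ.trans hB)).mem_of_forall_lt_exists hB hBlim fun z hz => ?_
    obtain ⟨n, hn⟩ := Ordinal.lt_nfp_iff.1 (max_lt hγ hz)
    obtain ⟨y, hyD, hny, hys⟩ := hsD _ (hiter n) γ ((le_max_left _ _).trans_lt hn)
    exact ⟨y, hyD, ((le_max_right _ _).trans_lt hn).trans hny, hys.trans_lt (hsB n)⟩
  · exact (hD γ (hγ.trans hβ)).2.2 β hβ hlim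
      (sSup_inter_Iio_eq_of_inter_Ioi_subset hγ (fun y hy => hy.1.2 γ hy.2) hsup)

end DiagonalIntersection

theorem lt_csSup_image_Iio {f : Ordinal.{u} → Cardinal.{u}} {o γ : Ordinal.{u}}
    (hf : StrictMonoOn f (Iio o)) (ho : IsSuccLimit o) (hγ : γ < o) :
    f γ < sSup (f '' Iio o) :=
  (hf hγ (ho.succ_lt hγ) (lt_succ γ)).trans_le
    (le_csSup bddAbove_of_small (mem_image_of_mem f (ho.succ_lt hγ)))

theorem exists_mapsTo_injOn_of_mk_le {α β : Type v} [Nonempty β] {s : Set α} {t : Set β}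
    (h : #s ≤ #t) : ∃ f : α → β, MapsTo f s t ∧ InjOn f s := by
  classical
  obtain ⟨e⟩ := h
  refine ⟨fun x => if hx : x ∈ s then e ⟨x, hx⟩ else Classical.arbitrary β,
    fun x hx => by simp [hx], fun x hx y hy hxy => ?_⟩
  simpa [hx, hy, Subtype.val_inj] using hxy

section Omega1

variable {A : Set Ordinal.{u}}

theorem HasCard.mk_eq {c : Cardinal.{u}} (h : HasCard A c) : #A = lift.{u + 1} c := by
  obtain ⟨e, he⟩ := h
  rw [← mk_congr he.equiv, mk_Iio_ordinal, card_ord]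

theorem countable_Iio_of_lt_omega1 {δ : Ordinal.{u}} (hδ : δ < ω₁) : (Iio δ).Countable := by
  rw [← le_aleph0_iff_set_countable, mk_Iio_ordinal, lift_le_aleph0, ← lt_aleph_one_iff]
  exact lt_ord.1 hδ

theorem exists_not_countable_image_of_hasCard {g : Ordinal.{u} → Ordinal.{u} → Ordinal.{u}}
    {δ : Ordinal.{u}} (hδ : δ < ω₁) (h : HasCard {x | ∃ α ∈ A, ∃ γ < δ, g α γ = x} ℵ₁) :
    ∃ γ < δ, ¬ ((g · γ) '' A).Countable := by
  by_contra! hcount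
  have hsub : {x | ∃ α ∈ A, ∃ γ < δ, g α γ = x} ⊆ ⋃ γ ∈ Iio δ, (g · γ) '' A := by
    rintro _ ⟨α, hα, γ, hγ, rfl⟩
    exact mem_biUnion hγ (mem_image_of_mem _ hα)
  have hle := le_aleph0_iff_set_countable.2
    (((countable_Iio_of_lt_omega1 hδ).biUnion hcount).mono hsub)
  simp [h.mk_eq] at hle

theorem exists_mapsTo_injOn_Iio_omega1 {W : Set Ordinal.{u}} (hW : ¬ W.Countable) :
    ∃ b : Ordinal.{u} → Ordinal.{u}, MapsTo b (Iio ω₁) W ∧ InjOn b (Iio ω₁) := by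
  refine exists_mapsTo_injOn_of_mk_le ?_
  rw [← le_aleph0_iff_set_countable, ← lt_aleph_one_iff, not_lt] at hW
  simpa [mk_Iio_ordinal] using hW

end Omega1

def IsClubSubfamily (lam : Ordinal.{u}) (C : Ordinal.{u} → Set Ordinal.{u})
    (b : Ordinal.{u} → Ordinal.{u}) : Prop :=
  (∀ β < ω₁, b β < lam) ∧ InjOn b (Iio ω₁) ∧ IsClubIn ω₁ (⋂ β ∈ Iio ω₁, C (b β))

def GalvinAt (κ : Cardinal.{u}) : Prop :=
  ∀ C : Ordinal.{u} → Set Ordinal.{u}, (∀ α < (succ κ).ord, IsClubIn ω₁ (C α)) →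
    ∃ b, IsClubSubfamily (succ κ).ord C b

theorem gp_eq_sInf_galvinAt : gp.{u} = sInf {κ | GalvinAt κ} := rfl

theorem not_galvinAt_of_lt_gp {κ : Cardinal.{u}} (h : κ < gp) : ¬ GalvinAt κ :=
  fun hκ => (csInf_le' hκ).not_gt h

theorem galvinAt_gp (h : gp.{u} ≠ 0) : GalvinAt gp.{u} := by
  have hne : {κ : Cardinal.{u} | GalvinAt κ}.Nonempty := by
    by_contra! he
    exact h (by rw [gp_eq_sInf_galvinAt, he, Cardinal.sInf_empty])
  exact csInf_mem hne

theorem not_galvinAt_of_forall_not_galvinAt {μ : Cardinal.{u}} {κ : Ordinal.{u} → Cardinal.{u}}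
    {g : Ordinal.{u} → Ordinal.{u} → Ordinal.{u}} (hκ : ∀ γ < ω₁, ¬ GalvinAt (κ γ))
    (hg : ∀ α < (succ μ).ord, ∀ γ < ω₁, g α γ < (succ (κ γ)).ord)
    (hA : ∀ A ⊆ Iio (succ μ).ord, HasCard A ℵ₁ →
      ∃ δ < ω₁, HasCard {x | ∃ α ∈ A, ∃ γ < δ, g α γ = x} ℵ₁) :
    ¬ GalvinAt μ := by
  intro hμ
  have hfail : ∀ γ < ω₁, ∃ D : Ordinal.{u} → Set Ordinal.{u},
      (∀ ξ < (succ (κ γ)).ord, IsClubIn ω₁ (D ξ)) ∧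
        ∀ b, ¬ IsClubSubfamily (succ (κ γ)).ord D b := by
    intro γ hγ
    simpa [GalvinAt] using hκ γ hγ
  choose! D hD_club hD_fail using hfail
  set C : Ordinal.{u} → Set Ordinal.{u} := fun α => {β | β < ω₁ ∧ ∀ γ < β, β ∈ D γ (g α γ)}
  obtain ⟨b, hb_lt, hb_inj, hb_club⟩ := hμ C fun α hα =>
    isClubIn_diagInter isRegular_aleph_one aleph0_lt_aleph_one fun γ hγ =>
      hD_club γ hγ _ (hg α hα γ hγ)
  obtain ⟨δ, hδ, hW⟩ := hA (b '' Iio ω₁) (image_subset_iff.2 hb_lt) ⟨b, hb_inj.bijOn_image⟩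
  obtain ⟨γ, hγδ, hγ_unc⟩ := exists_not_countable_image_of_hasCard hδ hW
  obtain ⟨b', hb'W, hb'_inj⟩ := exists_mapsTo_injOn_Iio_omega1 hγ_unc
  have hγ : γ < ω₁ := hγδ.trans hδ
  have hb'_lt : ∀ ξ < ω₁, b' ξ < (succ (κ γ)).ord := fun ξ hξ => by
    obtain ⟨_, ⟨β, hβ, rfl⟩, hξβ⟩ := hb'W hξ
    exact hξβ ▸ hg _ (hb_lt β hβ) γ hγ
  have htail : ∀ ξ ∈ Iio ω₁, (⋂ β ∈ Iio ω₁, C (b β)) ∩ Ioi γ ⊆ D γ (b' ξ) := by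
    rintro ξ hξ y ⟨hy, hγy⟩
    obtain ⟨_, ⟨β, hβ, rfl⟩, hξβ⟩ := hb'W hξ
    exact hξβ ▸ (mem_iInter₂.1 hy β hβ).2 γ hγy
  have hlim : IsSuccLimit ω₁ := isSuccLimit_ord (aleph0_le_aleph 1)
  exact hD_fail γ hγ b' ⟨hb'_lt, hb'_inj, isClubIn_biInter_of_inter_Ioi_subset hlim
    ⟨0, hlim.pos⟩ (fun ξ hξ => hD_club γ hγ _ (hb'_lt ξ hξ)) hb_club hγ htail⟩

theorem gp_ne_of_scale_omega1_general (μ : Cardinal.{u}) (μs : Ordinal.{u} → Cardinal.{u})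
    (J : IdealOn (Cardinal.aleph 1).ord) (g : Ordinal.{u} → Ordinal.{u} → Ordinal.{u})
    (hmono : ∀ γ δ, γ < δ → δ < (Cardinal.aleph 1).ord → μs γ < μs δ)
    (hsup : sSup (μs '' Set.Iio (Cardinal.aleph 1).ord) = μ)
    (hg : IsTcfWitness (Cardinal.aleph 1).ord J μs (Order.succ μ) g)
    (hA : ∀ A : Set Ordinal.{u}, A ⊆ Set.Iio (Order.succ μ).ord →
      HasCard A (Cardinal.aleph 1) →
      ∃ δ < (Cardinal.aleph 1).ord,
        HasCard {x : Ordinal | ∃ α ∈ A, ∃ γ < δ, g α γ = x} (Cardinal.aleph 1)) :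
    gp ≠ μ := by
  intro hgp
  have hlim : IsSuccLimit ω₁ := isSuccLimit_ord (aleph0_le_aleph 1)
  have hμs : ∀ γ < ω₁, μs γ < μ := fun γ hγ =>
    hsup ▸ lt_csSup_image_Iio (fun a _ b hb hab => hmono a b hab hb) hlim hγ
  refine not_galvinAt_of_forall_not_galvinAt
    (fun γ hγ => not_galvinAt_of_lt_gp (hgp ▸ hμs γ hγ))
    (fun α hα γ hγ => (hg.1 α hα γ hγ).trans (ord_lt_ord.2 (lt_succ _))) hA ?_
  exact hgp ▸ galvinAt_gp (hgp ▸ ne_bot_of_gt (hμs 0 hlim.pos))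

/-- If `μ` is a singular cardinal with `cf μ = ω₁` and `μ ≤ 2^ω`,
`(μs γ : γ < ω₁)` is a strictly increasing sequence of regular cardinals with supremum `μ`,
`J` is an ideal on `ω₁` extending the ideal of bounded sets, `g` witnesses
`tcf (∏_{γ<ω₁} μs γ, J) = μ⁺`, and every `A ⊆ μ⁺` of size `ℵ₁` admits `δ < ω₁` with
`|{g α γ : α ∈ A, γ < δ}| = ℵ₁`, then `𝔤𝔭 ≠ μ`. -/
theorem gp_ne_of_scale_omega1 (μ : Cardinal.{u}) (μs : Ordinal.{u} → Cardinal.{u})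
    (J : IdealOn (Cardinal.aleph 1).ord) (g : Ordinal.{u} → Ordinal.{u} → Ordinal.{u})
    (hcof : μ.ord.cof = Cardinal.aleph 1)
    (hsing : Cardinal.aleph 1 < μ)
    (hcont : μ ≤ 2 ^ Cardinal.aleph0)
    (hreg : ∀ γ < (Cardinal.aleph 1).ord, (μs γ).IsRegular)
    (hmono : ∀ γ δ, γ < δ → δ < (Cardinal.aleph 1).ord → μs γ < μs δ)
    (hsup : sSup (μs '' Set.Iio (Cardinal.aleph 1).ord) = μ)
    (hJ : ∀ δ < (Cardinal.aleph 1).ord, Set.Iio δ ∈ J.sets)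
    (hg : IsTcfWitness (Cardinal.aleph 1).ord J μs (Order.succ μ) g)
    (hA : ∀ A : Set Ordinal.{u}, A ⊆ Set.Iio (Order.succ μ).ord →
      HasCard A (Cardinal.aleph 1) →
      ∃ δ < (Cardinal.aleph 1).ord,
        HasCard {x : Ordinal | ∃ α ∈ A, ∃ γ < δ, g α γ = x} (Cardinal.aleph 1)) :
    gp ≠ μ :=
  gp_ne_of_scale_omega1_general μ μs J g hmono hsup hg hA
end

section
/- Assume ω = cf(μ) < μ < 2^ω, (μ_n : n < ω) is a strictly increasing sequence of regular cardinals with supremum μ, and there exists a good scale (f_α : α < μ⁺) witnessing tcf(∏_{n<ω} μ_n, J^bd_ω) = μ⁺, where J^bd_ω is the ideal of finite subsets of ω. Then 𝔤𝔭 ≠ μ. -/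
/-!
Suppose `𝔤𝔭 = μ`. Each `μₙ < μ` then carries a family `Cₙ` of `μₙ⁺` clubs of `ω₁` no `ℵ₁` of
which have a club intersection. Merging these families along the scale, `D α = ⋂ₙ Cₙ (f α n)`
gives `μ⁺` clubs, so `ℵ₁` of them, indexed by some `A ⊆ μ⁺`, do have a club intersection.
Since `ℵ₁ < cf μ⁺`, `A` accumulates at some `γ < μ⁺` of uncountable cofinality, and `γ` is a
good point. Interleaving `A` with the set witnessing goodness, the finitely many exceptional
coordinates of the `<*`-comparisons stabilise on an uncountable set, which yields one coordinate
`N` and uncountably many `β ∈ A` on which `β ↦ f β N` is strictly increasing. The clubs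
`C_N (f β N)` for these `β` then form an `ℵ₁`-subfamily of `C_N` whose intersection contains
that of the `D β`: a contradiction.
-/

open Cardinal Set

universe u

/-- The ideal `J^bd_θ` of bounded subsets of `θ` (for `θ = ω` this is the ideal
of finite subsets of `ω`). -/
def boundedIdeal (θ : Ordinal.{u}) : IdealOn θ where
  sets := {A | ∃ δ < θ, A ⊆ Set.Iio δ}
  subset_Iio := by
    rintro A ⟨δ, hδ, hA⟩
    exact hA.trans fun x hx => lt_trans hx hδ
  mem_of_subset := by
    rintro A ⟨δ, hδ, hA⟩ B hB
    exact ⟨δ, hδ, hB.trans hA⟩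
  union_mem := by
    rintro A ⟨δ₁, h₁, hA⟩ B ⟨δ₂, h₂, hB⟩
    refine ⟨max δ₁ δ₂, max_lt h₁ h₂, fun x hx => ?_⟩
    rcases hx with hx | hx
    · exact Set.mem_Iio.mpr (lt_of_lt_of_le (Set.mem_Iio.mp (hA hx)) (le_max_left _ _))
    · exact Set.mem_Iio.mpr (lt_of_lt_of_le (Set.mem_Iio.mp (hB hx)) (le_max_right _ _))
  proper := by
    rintro ⟨δ, hδ, h⟩
    exact absurd (h hδ) (lt_irrefl δ)

/-- `γ` is a good point for the sequence `f` (with respect to `J^bd_ω`):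
there are an unbounded `u ⊆ γ` and `n < ω` such that `α ↦ f α m` is strictly
increasing on `u` for every `m` with `n ≤ m < ω`. -/
def IsGoodPoint (f : Ordinal.{u} → Ordinal.{u} → Ordinal.{u}) (γ : Ordinal.{u}) : Prop :=
  ∃ v : Set Ordinal.{u}, v ⊆ Set.Iio γ ∧ (∀ β < γ, ∃ α ∈ v, β ≤ α) ∧
    ∃ n < Ordinal.omega0, ∀ m, n ≤ m → m < Ordinal.omega0 →
      ∀ α ∈ v, ∀ β ∈ v, α < β → f α m < f β m

open Filter Order Ordinal

lemma sSup_inter_Iio_eq_of_subset {C X : Set Ordinal.{u}} {β : Ordinal.{u}} (hXC : X ⊆ C)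
    (hX : sSup (X ∩ Iio β) = β) : sSup (C ∩ Iio β) = β :=
  le_antisymm (csSup_le' fun _ hx => hx.2.le) <| calc
    β = sSup (X ∩ Iio β) := hX.symm
    _ ≤ sSup (C ∩ Iio β) :=
      csSup_le_csSup' ⟨β, fun _ hx => hx.2.le⟩ (inter_subset_inter_left _ hXC)

lemma IsClubIn.mem_of_forall_lt {δ b : Ordinal.{u}} {C : Set Ordinal.{u}} (hC : IsClubIn δ C)
    (hbδ : b < δ) (hb : b ≠ 0) (hCb : ∀ c < b, ∃ x ∈ C, c < x ∧ x < b) : b ∈ C := by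
  refine hC.2.2 b hbδ (isSuccLimit_iff.2 ⟨hb, isSuccPrelimit_of_succ_lt fun c hc => ?_⟩) ?_
  · obtain ⟨x, -, hcx, hxb⟩ := hCb c hc
    exact (succ_le_of_lt hcx).trans_lt hxb
  · refine le_antisymm (csSup_le' fun _ hx => hx.2.le) (le_of_forall_lt fun c hc => ?_)
    obtain ⟨x, hxC, hcx, hxb⟩ := hCb c hc
    exact hcx.trans_le (le_csSup ⟨b, fun _ hy => hy.2.le⟩ ⟨hxC, hxb⟩)

lemma IsClubIn.iInter {δ : Ordinal.{u}} {ι : Sort*} [Nonempty ι] {C : ι → Set Ordinal.{u}}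
    (hC : ∀ i, IsClubIn δ (C i)) (hunb : ∀ a < δ, ∃ b ∈ ⋂ i, C i, a ≤ b) :
    IsClubIn δ (⋂ i, C i) :=
  ⟨(iInter_subset _ (Classical.arbitrary ι)).trans (hC _).1, hunb, fun β hβδ hβ hsup =>
    mem_iInter.2 fun i =>
      (hC i).2.2 β hβδ hβ (sSup_inter_Iio_eq_of_subset (iInter_subset _ i) hsup)⟩

lemma IsClubIn.biInter_of_subset {δ : Ordinal.{u}} {I : Set Ordinal.{u}} (hI : I.Nonempty)
    {C : Ordinal.{u} → Set Ordinal.{u}} (hC : ∀ i ∈ I, IsClubIn δ (C i)) {K : Set Ordinal.{u}}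
    (hK : IsClubIn δ K) (hKC : ∀ i ∈ I, K ⊆ C i) : IsClubIn δ (⋂ i ∈ I, C i) := by
  have : Nonempty I := hI.to_subtype
  rw [biInter_eq_iInter]
  exact IsClubIn.iInter (fun i => hC i i.2) fun a ha =>
    (hK.2.1 a ha).imp fun b hb => ⟨mem_iInter.2 fun i => hKC i i.2 hb.1, hb.2⟩

lemma exists_mem_iInter_nat_ge {δ : Ordinal.{u}} (hδ : ℵ₀ < δ.cof) {E : ℕ → Set Ordinal.{u}}
    (hE : ∀ n, IsClubIn δ (E n)) {a : Ordinal.{u}} (ha : a < δ) : ∃ b ∈ ⋂ n, E n, a ≤ b := by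
  choose! next hnextE hle_next using fun n => (hE n).2.1
  have hnext_lt : ∀ n, ∀ x < δ, next n x < δ := fun n x hx => (hE n).1 (hnextE n x hx)
  let step : Ordinal.{u} → Ordinal.{u} := fun x => succ (⨆ n, next n x)
  have hnext_lt_step : ∀ n x, next n x < step x := fun n x =>
    lt_succ_of_le (Ordinal.le_iSup (fun n => next n x) n)
  have hstep_lt : ∀ x < δ, step x < δ := fun x hx =>
    (one_lt_cof_iff.1 (one_lt_aleph0.trans hδ)).succ_lt
      (lift_iSup_lt_of_lt_cof (by simpa using hδ) (hnext_lt · x hx))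
  have hiter_lt : ∀ k, step^[k] a < δ := fun k => by
    induction k with
    | zero => exact ha
    | succ k ih => rw [Function.iterate_succ_apply']; exact hstep_lt _ ih
  -- Every `E n` is cofinal below the fixed point `nfp step a`, hence contains it.
  refine ⟨nfp step a, mem_iInter.2 fun n => (hE n).mem_of_forall_lt (nfp_lt_ord hδ hstep_lt ha)
    ?_ fun c hc => ?_, le_nfp step a⟩
  · exact ((hle_next n a ha).trans_lt (hnext_lt_step n a) |>.trans_le
      (iterate_le_nfp step a 1)).ne_bot
  · obtain ⟨k, hk⟩ := lt_nfp_iff.1 hc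
    refine ⟨next n (step^[k] a), hnextE n _ (hiter_lt k),
      hk.trans_le (hle_next n _ (hiter_lt k)), ?_⟩
    refine (hnext_lt_step n _).trans_le ?_
    rw [← Function.iterate_succ_apply' step]
    exact iterate_le_nfp step a (k + 1)

lemma IsClubIn.iInter_nat {δ : Ordinal.{u}} (hδ : ℵ₀ < δ.cof) {E : ℕ → Set Ordinal.{u}}
    (hE : ∀ n, IsClubIn δ (E n)) : IsClubIn δ (⋂ n, E n) :=
  IsClubIn.iInter hE fun _ => exists_mem_iInter_nat_ge hδ hE

def GalvinProperty (κ : Cardinal.{u}) : Prop :=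
  ∀ C : Ordinal.{u} → Set Ordinal.{u},
    (∀ α < (succ κ).ord, IsClubIn (ℵ₁).ord (C α)) →
    ∃ b : Ordinal.{u} → Ordinal.{u},
      (∀ β < (ℵ₁).ord, b β < (succ κ).ord) ∧ InjOn b (Iio (ℵ₁).ord) ∧
      IsClubIn (ℵ₁).ord (⋂ β ∈ Iio (ℵ₁).ord, C (b β))

lemma gp_eq_sInf : gp.{u} = sInf {κ | GalvinProperty κ} := rfl

lemma galvinProperty_gp (h : gp.{u} ≠ 0) : GalvinProperty gp.{u} := by
  have hne : {κ : Cardinal.{u} | GalvinProperty κ}.Nonempty :=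
    nonempty_iff_ne_empty.2 fun he => h (by rw [gp_eq_sInf, he, Cardinal.sInf_empty])
  exact csInf_mem hne

lemma not_galvinProperty_of_lt_gp {κ : Cardinal.{u}} (h : κ < gp) : ¬ GalvinProperty κ :=
  notMem_of_lt_csInf (gp_eq_sInf ▸ h) (OrderBot.bddBelow _)

lemma exists_aleph0_lt_cof_of_not_countable {A : Set Ordinal.{u}} (hA : ¬ A.Countable)
    {c : Ordinal.{u}} (hAc : A ⊆ Iio c) :
    ∃ γ ≤ c, ℵ₀ < γ.cof ∧ ∀ x < γ, ∃ y ∈ A, x < y ∧ y < γ := by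
  -- `γ` is the least ordinal below which `A` is uncountable.
  let S := {γ : Ordinal.{u} | ¬ (A ∩ Iio γ).Countable}
  have hcS : c ∈ S := by simpa [S, inter_eq_left.2 hAc] using hA
  have hγ : ¬ (A ∩ Iio (sInf S)).Countable := csInf_mem ⟨c, hcS⟩
  have hIic : ∀ x < sInf S, (A ∩ Iic x).Countable := fun x hx =>
    (not_not.1 (notMem_of_lt_csInf' hx)).insert x |>.mono fun y ⟨hyA, hyx⟩ =>
      hyx.eq_or_lt.imp id fun h => ⟨hyA, h⟩
  refine ⟨sInf S, csInf_le' hcS, lt_of_not_ge fun hcof => hγ ?_, fun x hx => ?_⟩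
  · have hcof' : Order.cof (Iio (sInf S)) ≤ ℵ₀ := by
      rw [cof_Iio, ← lift_cof, Cardinal.lift_le_aleph0]; exact hcof
    obtain ⟨s, hs, hsc⟩ := Order.exists_cof_eq (Iio (sInf S))
    have hs_countable : s.Countable := le_aleph0_iff_set_countable.1 (hsc ▸ hcof')
    refine (hs_countable.biUnion fun x _ => hIic x x.2).mono fun y ⟨hyA, hyγ⟩ => ?_
    obtain ⟨x, hxs, hyx⟩ := hs ⟨y, hyγ⟩
    exact mem_biUnion hxs ⟨hyA, hyx⟩
  · by_contra! h
    refine hγ ((hIic x hx).mono fun y hy => ?_)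
    exact ⟨hy.1, not_lt.1 fun hxy => (h y hy.1 hxy).not_gt hy.2⟩

lemma exists_seq_of_aleph0_lt_cof {γ : Ordinal.{u}} (hγ : ℵ₀ < γ.cof) {S : Set Ordinal.{u}}
    (hS : ∀ x < γ, ∃ y ∈ S, x < y ∧ y < γ) (step : Ordinal.{u} → Ordinal.{u})
    (hstep : ∀ x < γ, step x < γ) :
    ∃ u : Ordinal.{u} → Ordinal.{u},
      ∀ ξ < (ℵ₁).ord, u ξ ∈ S ∧ u ξ < γ ∧ ∀ η < ξ, step (u η) < u ξ := by
  choose! next hnextS hlt_next hnext_lt using hS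
  let u : Ordinal.{u} → Ordinal.{u} :=
    WellFoundedLT.fix fun ξ u => next (⨆ η : Iio ξ, step (u η η.2))
  have hu : ∀ ξ, u ξ = next (⨆ η : Iio ξ, step (u η)) := WellFoundedLT.fix_eq _
  refine ⟨u, fun ξ => ?_⟩
  induction ξ using WellFoundedLT.induction with
  | _ ξ ih =>
  intro hξ
  have hsup : (⨆ η : Iio ξ, step (u η)) < γ := by
    refine lift_iSup_lt_of_lt_cof ?_ fun η => hstep _ (ih η η.2 (η.2.trans hξ)).2.1
    rw [Cardinal.mk_Iio_ordinal, ← lift_cof, Cardinal.lift_lift, Cardinal.lift_lt]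
    exact (lt_aleph_one_iff.1 (lt_ord.1 hξ)).trans_lt hγ
  rw [hu]
  exact ⟨hnextS _ hsup, hnext_lt _ hsup, fun η hη =>
    (le_ciSup Ordinal.bddAbove_of_small (⟨η, hη⟩ : Iio ξ)).trans_lt (hlt_next _ hsup)⟩

lemma exists_not_countable_inter_preimage {α : Type*} {s : Set α} (hs : ¬ s.Countable)
    (g : α → ℕ) : ∃ n, ¬ (s ∩ g ⁻¹' {n}).Countable := by
  by_contra! h
  refine hs ((countable_iUnion h).mono fun x hx => ?_)
  exact mem_iUnion.2 ⟨g x, hx, rfl⟩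

lemma not_countable_Iio_ord_aleph_one : ¬ (Iio (ℵ₁).ord : Set Ordinal.{u}).Countable := by
  rw [← le_aleph0_iff_set_countable, Cardinal.mk_Iio_ordinal, card_ord, ← lift_aleph0.{u + 1, u},
    Cardinal.lift_le, not_le]
  exact aleph0_lt_aleph_one

lemma exists_injOn_Iio_ord_aleph_one {T : Set Ordinal.{u}} (hT : ¬ T.Countable) :
    ∃ e : Ordinal.{u} → Ordinal.{u}, MapsTo e (Iio (ℵ₁).ord) T ∧ InjOn e (Iio (ℵ₁).ord) := by
  have hle : #(Iio (ℵ₁).ord : Set Ordinal.{u}) ≤ #T := by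
    rw [Cardinal.mk_Iio_ordinal, card_ord, lift_aleph, Ordinal.lift_one, ← succ_aleph0]
    exact succ_le_of_lt (not_le.1 (hT ∘ le_aleph0_iff_set_countable.1))
  obtain ⟨e⟩ := hle
  refine ⟨fun x => if h : x < (ℵ₁).ord then e ⟨x, h⟩ else 0, fun x hx => ?_,
    fun x hx y hy hxy => ?_⟩
  · simp only [dif_pos (show x < (ℵ₁).ord from hx), Subtype.coe_prop]
  · simp only [dif_pos (show x < (ℵ₁).ord from hx), dif_pos (show y < (ℵ₁).ord from hy),
      Subtype.val_inj, e.injective.eq_iff, Subtype.mk.injEq] at hxy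
    exact hxy

lemma exists_image_Iio_subset_Iio {o a : Ordinal.{u}} (ho : o.card < a.cof)
    {b : Ordinal.{u} → Ordinal.{u}} (hb : ∀ ρ < o, b ρ < a) :
    ∃ c < a, b '' Iio o ⊆ Iio c := by
  refine ⟨⨆ ρ : Iio o, b ρ + 1, lift_iSup_add_one_lt_of_lt_cof ?_ fun ρ => hb ρ ρ.2, ?_⟩
  · rwa [Cardinal.mk_Iio_ordinal, ← lift_cof, Cardinal.lift_lift, Cardinal.lift_lt]
  · rintro _ ⟨ρ, hρ, rfl⟩
    exact (lt_add_one (b ρ)).trans_le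
      (le_ciSup (f := fun ρ : Iio o => b ρ + 1) Ordinal.bddAbove_of_small ⟨ρ, hρ⟩)

lemma IsTcfWitness.eventually_lt {μs : Ordinal.{u} → Cardinal.{u}} {lam : Cardinal.{u}}
    {f : Ordinal.{u} → Ordinal.{u} → Ordinal.{u}} (hf : IsTcfWitness ω (boundedIdeal ω) μs lam f)
    {α β : Ordinal.{u}} (hαβ : α < β) (hβ : β < lam.ord) :
    ∀ᶠ m : ℕ in atTop, f α m < f β m := by
  obtain ⟨d, hd, hsub⟩ := hf.2.1 α β hαβ hβ
  obtain ⟨n, rfl⟩ := lt_omega0.1 hd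
  refine eventually_atTop.2 ⟨n, fun m hm => not_le.1 fun hle => ?_⟩
  exact (Nat.cast_lt.1 (mem_Iio.1 (hsub ⟨natCast_lt_omega0 m, hle⟩))).not_ge hm

lemma IsGoodPoint.exists_eventually_strictMonoOn {f : Ordinal.{u} → Ordinal.{u} → Ordinal.{u}}
    {γ : Ordinal.{u}} (hγ : IsGoodPoint f γ) (hlim : IsSuccLimit γ) :
    ∃ v : Set Ordinal.{u}, (∀ x < γ, ∃ y ∈ v, x < y ∧ y < γ) ∧
      ∀ᶠ m : ℕ in atTop, StrictMonoOn (f · m) v := by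
  obtain ⟨v, hvγ, hv, n, hn, hmono⟩ := hγ
  obtain ⟨n, rfl⟩ := lt_omega0.1 hn
  refine ⟨v, fun x hx => ?_, eventually_atTop.2 ⟨n, fun m hm α hα β hβ hαβ =>
    hmono m (Nat.cast_le.2 hm) (natCast_lt_omega0 m) α hα β hβ hαβ⟩⟩
  obtain ⟨y, hyv, hy⟩ := hv (succ x) (hlim.succ_lt hx)
  exact ⟨y, hyv, succ_le_iff.1 hy, hvγ hyv⟩

lemma exists_coord_strictMonoOn_of_isGoodPoint {μs : Ordinal.{u} → Cardinal.{u}}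
    {lam : Cardinal.{u}} {f : Ordinal.{u} → Ordinal.{u} → Ordinal.{u}}
    (hf : IsTcfWitness ω (boundedIdeal ω) μs lam f)
    {γ : Ordinal.{u}} (hγ : γ < lam.ord) (hcof : ℵ₀ < γ.cof) (hgood : IsGoodPoint f γ)
    {A : Set Ordinal.{u}} (hA : ∀ x < γ, ∃ y ∈ A, x < y ∧ y < γ) :
    ∃ N : ℕ, ∃ T : Set Ordinal.{u}, ¬ T.Countable ∧
      ∃ β : Ordinal.{u} → Ordinal.{u}, MapsTo β T A ∧ StrictMonoOn (fun ξ => f (β ξ) N) T := by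
  obtain ⟨v, hv, hv_mono⟩ :=
    hgood.exists_eventually_strictMonoOn (one_lt_cof_iff.1 (one_lt_aleph0.trans hcof))
  choose! B hBA hlt_B hB_lt using hA
  choose! W hWv hlt_W hW_lt using hv
  -- Interleave: `u ξ < B (u ξ) < W (B (u ξ)) < u ζ` for `ξ < ζ`, with `u ξ, W (B (u ξ)) ∈ v`.
  obtain ⟨u, hu⟩ := exists_seq_of_aleph0_lt_cof hcof
    (fun x hx => ⟨W x, hWv x hx, hlt_W x hx, hW_lt x hx⟩) (W ∘ B) fun x hx => hW_lt _ (hB_lt x hx)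
  have hev : ∀ ξ < (ℵ₁).ord, ∀ᶠ m : ℕ in atTop, f (u ξ) m < f (B (u ξ)) m ∧
      f (B (u ξ)) m < f (W (B (u ξ))) m ∧ StrictMonoOn (f · m) v := fun ξ hξ => by
    have huγ := (hu ξ hξ).2.1
    exact (hf.eventually_lt (hlt_B _ huγ) ((hB_lt _ huγ).trans hγ)).and
      ((hf.eventually_lt (hlt_W _ (hB_lt _ huγ)) ((hW_lt _ (hB_lt _ huγ)).trans hγ)).and hv_mono)
  choose! n hn using fun ξ hξ => eventually_atTop.1 (hev ξ hξ)
  obtain ⟨N, hN⟩ := exists_not_countable_inter_preimage not_countable_Iio_ord_aleph_one n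
  refine ⟨N, _, hN, B ∘ u, fun ξ hξ => hBA _ (hu ξ hξ.1).2.1, fun ξ hξ ζ hζ hξζ => ?_⟩
  have hξN := hn ξ hξ.1 N (le_of_eq hξ.2)
  have hζN := hn ζ hζ.1 N (le_of_eq hζ.2)
  calc f (B (u ξ)) N < f (W (B (u ξ))) N := hξN.2.1
    _ < f (u ζ) N := hξN.2.2 (hWv _ (hB_lt _ (hu ξ hξ.1).2.1)) (hu ζ hζ.1).1
        ((hu ζ hζ.1).2.2 ξ hξζ)
    _ < f (B (u ζ)) N := hζN.1

theorem exists_galvinProperty_of_goodScale {μ : Cardinal.{u}} {μs : Ordinal.{u} → Cardinal.{u}}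
    {f : Ordinal.{u} → Ordinal.{u} → Ordinal.{u}} (hμ : ℵ₀ < μ)
    (hf : IsTcfWitness ω (boundedIdeal ω) μs (succ μ) f)
    (hgood : ∀ γ < (succ μ).ord, ℵ₀ < γ.cof → IsGoodPoint f γ) (hgp : GalvinProperty μ) :
    ∃ n : ℕ, GalvinProperty (μs n) := by
  by_contra! h
  simp only [GalvinProperty, not_forall, not_exists] at h
  choose C hC hC_bad using h
  have hf_lt : ∀ α < (succ μ).ord, ∀ n : ℕ, f α n < (succ (μs n)).ord := fun α hα n =>
    (hf.1 α hα n (natCast_lt_omega0 n)).trans (ord_lt_ord.2 (lt_succ _))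
  obtain ⟨b, hb_lt, hb_inj, hb_club⟩ := hgp (fun α => ⋂ n : ℕ, C n (f α n)) fun α hα =>
    IsClubIn.iInter_nat (by rw [isRegular_aleph_one.cof_ord]; exact aleph0_lt_aleph_one)
      fun n => hC n _ (hf_lt α hα n)
  have hℵ₁ : (ℵ₁).ord.card < (succ μ).ord.cof := by
    rw [card_ord, (isRegular_succ hμ.le).cof_ord, ← succ_aleph0]
    exact succ_lt_succ_iff.2 hμ
  obtain ⟨c, hc, hbc⟩ := exists_image_Iio_subset_Iio hℵ₁ hb_lt
  obtain ⟨γ, hγc, hγcof, hγb⟩ := exists_aleph0_lt_cof_of_not_countable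
    (fun h => not_countable_Iio_ord_aleph_one (countable_of_injective_of_countable_image hb_inj h))
    hbc
  have hγ := hγc.trans_lt hc
  obtain ⟨N, T, hT, β, hβb, hβ_mono⟩ :=
    exists_coord_strictMonoOn_of_isGoodPoint hf hγ hγcof (hgood γ hγ hγcof) hγb
  obtain ⟨e, he, he_inj⟩ := exists_injOn_Iio_ord_aleph_one hT
  have hβe : ∀ ρ < (ℵ₁).ord, ∃ ι < (ℵ₁).ord, b ι = β (e ρ) := fun ρ hρ => hβb (he hρ)
  have hβe_lt : ∀ ρ < (ℵ₁).ord, f (β (e ρ)) N < (succ (μs N)).ord := fun ρ hρ => by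
    obtain ⟨ι, hι, hbι⟩ := hβe ρ hρ
    exact hbι ▸ hf_lt _ (hb_lt ι hι) N
  refine hC_bad N (fun ρ => f (β (e ρ)) N) ⟨hβe_lt, hβ_mono.injOn.comp he_inj he, ?_⟩
  refine IsClubIn.biInter_of_subset ⟨0, isRegular_aleph_one.ord_pos⟩
    (fun ρ hρ => hC N _ (hβe_lt ρ hρ)) hb_club fun ρ hρ x hx => ?_
  obtain ⟨ι, hι, hbι⟩ := hβe ρ hρ
  exact mem_iInter.1 (hbι ▸ mem_iInter₂.1 hx ι hι) N

lemma apply_natCast_lt_of_sSup_eq {μ : Cardinal.{u}} {μs : Ordinal.{u} → Cardinal.{u}}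
    (hmono : ∀ i j, i < j → j < ω → μs i < μs j) (hsup : sSup (μs '' Iio ω) = μ) (n : ℕ) :
    μs n < μ := by
  have hn : ((n + 1 : ℕ) : Ordinal) < ω := natCast_lt_omega0 _
  refine (hmono n (n + 1 : ℕ) (by exact_mod_cast n.lt_succ_self) hn).trans_le ?_
  exact hsup ▸ le_csSup Cardinal.bddAbove_of_small ⟨_, hn, rfl⟩

theorem gp_ne_of_goodScale_general (μ : Cardinal.{u}) (μs : Ordinal.{u} → Cardinal.{u})
    (f : Ordinal.{u} → Ordinal.{u} → Ordinal.{u})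
    (hsing : Cardinal.aleph0 < μ)
    (hmono : ∀ i j, i < j → j < Ordinal.omega0 → μs i < μs j)
    (hsup : sSup (μs '' Set.Iio Ordinal.omega0) = μ)
    (hf : IsTcfWitness Ordinal.omega0 (boundedIdeal Ordinal.omega0) μs (Order.succ μ) f)
    (hgood : ∀ γ < (Order.succ μ).ord, Cardinal.aleph0 < γ.cof → IsGoodPoint f γ) :
    gp ≠ μ := by
  intro hgp
  have hμ : GalvinProperty μ := hgp ▸ galvinProperty_gp (hgp ▸ (aleph0_pos.trans hsing).ne')
  obtain ⟨n, hn⟩ := exists_galvinProperty_of_goodScale hsing hf hgood hμ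
  exact not_galvinProperty_of_lt_gp (hgp ▸ apply_natCast_lt_of_sSup_eq hmono hsup n) hn

/-- If `ω = cf μ < μ < 2^ω`, `(μs n : n < ω)` is a strictly increasing
sequence of regular cardinals with supremum `μ`, and there is a good scale
`(f α : α < μ⁺)` witnessing `tcf (∏_{n<ω} μs n, J^bd_ω) = μ⁺`, then `𝔤𝔭 ≠ μ`. -/
theorem gp_ne_of_goodScale (μ : Cardinal.{u}) (μs : Ordinal.{u} → Cardinal.{u})
    (f : Ordinal.{u} → Ordinal.{u} → Ordinal.{u})
    (hcof : μ.ord.cof = Cardinal.aleph0)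
    (hsing : Cardinal.aleph0 < μ)
    (hcont : μ < 2 ^ Cardinal.aleph0)
    (hreg : ∀ i < Ordinal.omega0, (μs i).IsRegular)
    (hmono : ∀ i j, i < j → j < Ordinal.omega0 → μs i < μs j)
    (hsup : sSup (μs '' Set.Iio Ordinal.omega0) = μ)
    (hf : IsTcfWitness Ordinal.omega0 (boundedIdeal Ordinal.omega0) μs (Order.succ μ) f)
    (hgood : ∀ γ < (Order.succ μ).ord, Cardinal.aleph0 < γ.cof → IsGoodPoint f γ) :
    gp ≠ μ :=
  gp_ne_of_goodScale_general μ μs f hsing hmono hsup hf hgood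
end
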